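/- Let f be a bi-univalent function of the class S*_σ(φ), i.e. f is bi-univalent with inverse extension F and both zf'(z)/f(z) ≺ φ(z) and wF'(w)/F(w) ≺ φ(w). Then the third Taylor coefficient of f satisfies |a₃| ≤ min{ B₁ + |B₂ − B₁|, (B₁² + B₁ + |B₂ − B₁|)/2, R }, where R = (1/4)(B₁ + 3B₁·max{1, |B₁ − 4B₂|/(3B₁)}). -/

import Mathlib

/-!
Write `z f'/f = φ ∘ ω` and `w F'/F = φ ∘ τ` with Schwarz functions `ω`, `τ`, and let
`c₁ = ω'(0)`, `c₂ = ω''(0)/2`, `d₂ = τ''(0)/2`. Comparing Taylor coefficients up to order three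
(Leibniz and chain rule), and using that the inverse has coefficients `A₂ = -a₂`,
`A₃ = 2a₂² - a₃`, gives `τ'(0) = -c₁` and two expressions
`a₃ = B₂c₁² + ¾B₁c₂ + ¼B₁d₂ = ½(B₁² + B₂)c₁² + ½B₁c₂`.
The bound `|c₂| ≤ 1 - |c₁|²` (the Schwarz lemma for a Möbius transform of `ω(z)/z`) then turns
each expression into the stated estimates via the triangle inequality.
-/

open Metric Set Complex

noncomputable section

/-- `g` is subordinate to `h` on the unit disk: there is an analytic `ω : 𝔻 → 𝔻`
with `ω 0 = 0` such that `g = h ∘ ω` on `𝔻`. -/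
def Subordinate (g h : ℂ → ℂ) : Prop :=
  ∃ ω : ℂ → ℂ, DifferentiableOn ℂ ω (ball 0 1) ∧ ω 0 = 0 ∧
    (∀ z ∈ ball (0 : ℂ) 1, ω z ∈ ball (0 : ℂ) 1) ∧
    ∀ z ∈ ball (0 : ℂ) 1, g z = h (ω z)

open Filter Topology ComplexConjugate

lemma normSq_one_sub_conj_mul_sub_normSq_sub (a w : ℂ) :
    normSq (1 - conj a * w) - normSq (w - a) = (1 - normSq a) * (1 - normSq w) := by
  simp only [normSq_apply, sub_re, sub_im, mul_re, mul_im, one_re, one_im, conj_re, conj_im]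
  ring

lemma one_sub_conj_mul_ne_zero {a w : ℂ} (ha : ‖a‖ < 1) (hw : ‖w‖ ≤ 1) : 1 - conj a * w ≠ 0 := by
  refine sub_ne_zero.2 fun h => ?_
  have : ‖conj a * w‖ < 1 := by
    rw [norm_mul, RCLike.norm_conj]
    exact mul_lt_one_of_nonneg_of_lt_one_left (norm_nonneg a) ha hw
  simp [← h] at this

lemma norm_sub_div_one_sub_conj_mul_le_one {a w : ℂ} (ha : ‖a‖ < 1) (hw : ‖w‖ ≤ 1) :
    ‖(w - a) / (1 - conj a * w)‖ ≤ 1 := by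
  have hden : 0 < ‖1 - conj a * w‖ := norm_pos_iff.2 (one_sub_conj_mul_ne_zero ha hw)
  rw [norm_div, div_le_one hden, ← sq_le_sq₀ (norm_nonneg _) hden.le, ← normSq_eq_norm_sq,
    ← normSq_eq_norm_sq, ← sub_nonneg, normSq_one_sub_conj_mul_sub_normSq_sub]
  have ha' : normSq a ≤ 1 := by rw [normSq_eq_norm_sq]; nlinarith [norm_nonneg a]
  have hw' : normSq w ≤ 1 := by rw [normSq_eq_norm_sq]; nlinarith [norm_nonneg w]
  exact mul_nonneg (sub_nonneg.2 ha') (sub_nonneg.2 hw')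

lemma norm_deriv_le_one_sub_sq_of_mapsTo_closedBall {ψ : ℂ → ℂ}
    (hψ : DifferentiableOn ℂ ψ (ball 0 1)) (hmaps : MapsTo ψ (ball 0 1) (closedBall 0 1)) :
    ‖deriv ψ 0‖ ≤ 1 - ‖ψ 0‖ ^ 2 := by
  have h0 : (0 : ℂ) ∈ ball (0 : ℂ) 1 := mem_ball_self one_pos
  have hψ0 : ‖ψ 0‖ ≤ 1 := mem_closedBall_zero_iff.1 (hmaps h0)
  rcases hψ0.eq_or_lt with hψ0 | hψ0
  · have hmax : IsMaxOn (norm ∘ ψ) (ball 0 1) 0 := fun z hz => by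
      simpa [hψ0] using hmaps hz
    have hconst : ψ =ᶠ[𝓝 0] fun _ => ψ 0 :=
      (Complex.eqOn_of_isPreconnected_of_isMaxOn_norm (convex_ball 0 1).isPreconnected
        isOpen_ball hψ h0 hmax).eventuallyEq_of_mem (ball_mem_nhds 0 one_pos)
    simp [hconst.deriv_eq, hψ0]
  set a := ψ 0
  have hden : ∀ z ∈ ball (0 : ℂ) 1, 1 - conj a * ψ z ≠ 0 := fun z hz =>
    one_sub_conj_mul_ne_zero hψ0 (mem_closedBall_zero_iff.1 (hmaps hz))
  set χ : ℂ → ℂ := fun z => (ψ z - a) / (1 - conj a * ψ z)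
  have hχ : DifferentiableOn ℂ χ (ball 0 1) :=
    (hψ.sub_const a).div ((differentiableOn_const 1).sub (hψ.const_mul _)) hden
  have hχ0 : χ 0 = 0 := by simp [χ, a]
  have hχmaps : MapsTo χ (ball 0 1) (closedBall (χ 0) 1) := fun z hz => by
    rw [hχ0, mem_closedBall_zero_iff]
    exact norm_sub_div_one_sub_conj_mul_le_one hψ0 (mem_closedBall_zero_iff.1 (hmaps hz))
  have ha : 1 - conj a * a = ((1 - ‖a‖ ^ 2 : ℝ) : ℂ) := by
    rw [mul_comm, mul_conj, normSq_eq_norm_sq]; push_cast; ring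
  have hpos : 0 < 1 - ‖a‖ ^ 2 := by nlinarith [norm_nonneg a]
  have hχ' : deriv χ 0 = deriv ψ 0 / ((1 - ‖a‖ ^ 2 : ℝ) : ℂ) := by
    have hψ' := (hψ.differentiableAt (ball_mem_nhds 0 one_pos)).hasDerivAt
    rw [((hψ'.sub_const a).fun_div ((hψ'.const_mul (conj a)).const_sub 1) (hden 0 h0)).deriv,
      sub_self, ha, zero_mul, sub_zero]
    have hne : ((1 - ‖a‖ ^ 2 : ℝ) : ℂ) ≠ 0 := by exact_mod_cast hpos.ne'
    field_simp
  have := Complex.norm_deriv_le_one_of_mapsTo_ball hχ hχmaps one_pos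
  rwa [hχ', norm_div, norm_real, Real.norm_of_nonneg hpos.le, div_le_one hpos] at this

lemma norm_iteratedDeriv_two_le_of_mapsTo_ball {ω : ℂ → ℂ}
    (hω : DifferentiableOn ℂ ω (ball 0 1)) (hω0 : ω 0 = 0)
    (hmaps : MapsTo ω (ball 0 1) (ball 0 1)) :
    ‖iteratedDeriv 2 ω 0 / 2‖ ≤ 1 - ‖deriv ω 0‖ ^ 2 := by
  set ψ := dslope ω 0
  have hψ : DifferentiableOn ℂ ψ (ball 0 1) :=
    (differentiableOn_dslope (ball_mem_nhds 0 one_pos)).2 hω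
  have hψmaps : MapsTo ψ (ball 0 1) (closedBall 0 1) := fun z hz => by
    have hmaps' : MapsTo ω (ball 0 1) (closedBall (ω 0) 1) := by
      rw [hω0]; exact hmaps.mono_right ball_subset_closedBall
    simpa using Complex.norm_dslope_le_div_of_mapsTo_ball hω hmaps' hz
  have hωψ : ω = fun z => z * ψ z := funext fun z => by
    simpa [hω0] using (sub_smul_dslope ω 0 z).symm
  have h2 : iteratedDeriv 2 ω 0 = 2 * deriv ψ 0 := by
    rw [hωψ, iteratedDeriv_fun_mul (f := fun z => z) contDiffAt_id
      ((hψ.analyticAt (ball_mem_nhds 0 one_pos)).contDiffAt)]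
    simp [iteratedDeriv_fun_id_zero]
  have hψ0 : ψ 0 = deriv ω 0 := dslope_same ω 0
  rw [h2, mul_div_cancel_left₀ _ two_ne_zero, ← hψ0]
  exact norm_deriv_le_one_sub_sq_of_mapsTo_closedBall hψ hψmaps

namespace AnalyticAt

variable {h g : ℂ → ℂ} {x : ℂ}

lemma deriv_comp_eventuallyEq (hh : AnalyticAt ℂ h (g x)) (hg : AnalyticAt ℂ g x) :
    deriv (h ∘ g) =ᶠ[𝓝 x] (deriv h ∘ g) * deriv g := by
  filter_upwards [hg.continuousAt.eventually hh.eventually_analyticAt, hg.eventually_analyticAt]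
    with z hhz hgz
  exact deriv_comp z hhz.differentiableAt hgz.differentiableAt

lemma iteratedDeriv_two_comp (hh : AnalyticAt ℂ h (g x)) (hg : AnalyticAt ℂ g x) :
    iteratedDeriv 2 (h ∘ g) x =
      iteratedDeriv 2 h (g x) * deriv g x ^ 2 + deriv h (g x) * iteratedDeriv 2 g x := by
  rw [iteratedDeriv_succ', (hh.deriv_comp_eventuallyEq hg).iteratedDeriv_eq,
    iteratedDeriv_mul (hh.deriv.comp hg).contDiffAt hg.deriv.contDiffAt]
  simp only [Nat.reduceAdd, Finset.sum_range_succ, Finset.range_one, Finset.sum_singleton,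
    Nat.choose_succ_self_right, zero_add, Nat.cast_one, iteratedDeriv_zero, Function.comp_apply,
    one_mul, tsub_zero, iteratedDeriv_succ, Nat.choose_self,
    deriv_comp x hh.deriv.differentiableAt hg.differentiableAt, tsub_self]
  ring

lemma iteratedDeriv_three_comp (hh : AnalyticAt ℂ h (g x)) (hg : AnalyticAt ℂ g x) :
    iteratedDeriv 3 (h ∘ g) x = iteratedDeriv 3 h (g x) * deriv g x ^ 3 +
      3 * iteratedDeriv 2 h (g x) * deriv g x * iteratedDeriv 2 g x +
      deriv h (g x) * iteratedDeriv 3 g x := by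
  rw [iteratedDeriv_succ', (hh.deriv_comp_eventuallyEq hg).iteratedDeriv_eq,
    iteratedDeriv_mul (hh.deriv.comp hg).contDiffAt hg.deriv.contDiffAt]
  simp only [Nat.reduceAdd, Finset.sum_range_succ, Finset.range_one, Finset.sum_singleton,
    Nat.choose_zero_right, Nat.cast_one, iteratedDeriv_zero, Function.comp_apply, one_mul,
    tsub_zero, iteratedDeriv_succ, Nat.choose_succ_self_right, Nat.cast_ofNat,
    deriv_comp x hh.deriv.differentiableAt hg.differentiableAt, Nat.add_one_sub_one,
    Nat.choose_self, hh.deriv.iteratedDeriv_two_comp hg, tsub_self]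
  ring

end AnalyticAt

section TaylorCoefficients

variable {f F k : ℂ → ℂ}

lemma coeffs_of_comp_eventuallyEq_id (hF : AnalyticAt ℂ F 0) (hf : AnalyticAt ℂ f 0)
    (hf0 : f 0 = 0) (hf1 : deriv f 0 = 1) (h : F ∘ f =ᶠ[𝓝 0] id) :
    deriv F 0 = 1 ∧ iteratedDeriv 2 F 0 = -iteratedDeriv 2 f 0 ∧
      iteratedDeriv 3 F 0 = 3 * iteratedDeriv 2 f 0 ^ 2 - iteratedDeriv 3 f 0 := by
  rw [← hf0] at hF
  have h1 := h.deriv_eq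
  have h2 := h.iteratedDeriv_eq 2
  have h3 := h.iteratedDeriv_eq 3
  rw [deriv_comp 0 hF.differentiableAt hf.differentiableAt] at h1
  rw [hF.iteratedDeriv_two_comp hf] at h2
  rw [hF.iteratedDeriv_three_comp hf] at h3
  simp only [hf0, hf1, deriv_id, iteratedDeriv_id, mul_one, one_pow] at h1 h2 h3
  simp only [OfNat.ofNat_ne_zero, OfNat.ofNat_ne_one, if_false, h1] at h2 h3
  exact ⟨h1, by linear_combination h2, by linear_combination h3 - 3 * iteratedDeriv 2 f 0 * h2⟩

lemma coeffs_of_mul_eventuallyEq_id_mul_deriv (hf : AnalyticAt ℂ f 0) (hk : AnalyticAt ℂ k 0)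
    (hf0 : f 0 = 0) (hf1 : deriv f 0 = 1) (hk0 : k 0 = 1)
    (h : k * f =ᶠ[𝓝 0] fun z => z * deriv f z) :
    iteratedDeriv 2 f 0 = 2 * deriv k 0 ∧
      2 * iteratedDeriv 3 f 0 = 3 * iteratedDeriv 2 k 0 + 3 * deriv k 0 * iteratedDeriv 2 f 0 := by
  have h2 := h.iteratedDeriv_eq 2
  have h3 := h.iteratedDeriv_eq 3
  rw [iteratedDeriv_mul hk.contDiffAt hf.contDiffAt,
    iteratedDeriv_fun_mul (f := fun z => z) contDiffAt_id hf.deriv.contDiffAt] at h2 h3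
  simp only [Nat.reduceAdd, Finset.sum_range_succ, Finset.range_one, Finset.sum_singleton,
    Nat.choose_zero_right, Nat.cast_one, iteratedDeriv_zero, hk0, mul_one, tsub_zero, one_mul,
    Nat.choose_succ_self_right, Nat.cast_ofNat, iteratedDeriv_one, Nat.add_one_sub_one, hf1,
    Nat.choose_self, tsub_self, hf0, mul_zero, add_zero, iteratedDeriv_fun_id_zero, mul_ite,
    ← iteratedDeriv_succ', ite_mul, zero_mul, Finset.sum_ite_eq', Finset.mem_range,
    Nat.one_lt_ofNat, ↓reduceIte, Nat.choose_one_right, Nat.reduceSub] at h2 h3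
  exact ⟨by linear_combination -h2, by linear_combination -h3⟩

lemma coeffs_of_starlike_subordinate {φ ω : ℂ → ℂ} (hf : AnalyticAt ℂ f 0)
    (hφ : AnalyticAt ℂ φ 0) (hω : AnalyticAt ℂ ω 0) (hf0 : f 0 = 0) (hf1 : deriv f 0 = 1)
    (hφ0 : φ 0 = 1) (hω0 : ω 0 = 0) (h : (φ ∘ ω) * f =ᶠ[𝓝 0] fun z => z * deriv f z) :
    iteratedDeriv 2 f 0 = 2 * deriv φ 0 * deriv ω 0 ∧
      2 * iteratedDeriv 3 f 0 = 3 * (iteratedDeriv 2 φ 0 * deriv ω 0 ^ 2 +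
        deriv φ 0 * iteratedDeriv 2 ω 0) + 6 * deriv φ 0 ^ 2 * deriv ω 0 ^ 2 := by
  rw [← hω0] at hφ
  have hk0 : (φ ∘ ω) 0 = 1 := by simp [hω0, hφ0]
  obtain ⟨h2, h3⟩ := coeffs_of_mul_eventuallyEq_id_mul_deriv hf (hφ.comp hω) hf0 hf1 hk0 h
  rw [deriv_comp 0 hφ.differentiableAt hω.differentiableAt, hω0] at h2 h3
  rw [hφ.iteratedDeriv_two_comp hω, hω0] at h3
  exact ⟨by linear_combination h2, by linear_combination h3 + 3 * deriv φ 0 * deriv ω 0 * h2⟩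

lemma eqOn_mul_of_eq_id_mul_deriv_div {U : Set ℂ} (hfi : InjOn f U) (h0 : (0 : ℂ) ∈ U)
    (hf0 : f 0 = 0) (hk : ∀ z ∈ U, z ≠ 0 → k z = z * deriv f z / f z) :
    EqOn (k * f) (fun z => z * deriv f z) U := fun z hz => by
  rcases eq_or_ne z 0 with rfl | hz0
  · simp [hf0]
  · have hfz : f z ≠ 0 := fun h => hz0 (hfi hz h0 (h.trans hf0.symm))
    simp [hk z hz hz0, hfz]

end TaylorCoefficients

lemma norm_ofReal_mul (r : ℝ) (z : ℂ) : ‖(r : ℂ) * z‖ = |r| * ‖z‖ := by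
  rw [norm_mul, norm_real, Real.norm_eq_abs]

lemma norm_le_of_coeff_representations {B₁ B₂ : ℝ} (hB₁ : 0 < B₁) {a c p q : ℂ}
    (hp : ‖p‖ ≤ 1 - ‖c‖ ^ 2) (hq : ‖q‖ ≤ 1 - ‖c‖ ^ 2)
    (ha : a = B₂ * c ^ 2 + 3 / 4 * B₁ * p + 1 / 4 * B₁ * q)
    (ha' : a = (B₁ ^ 2 + B₂) / 2 * c ^ 2 + B₁ / 2 * p) :
    ‖a‖ ≤ min (min (B₁ + |B₂ - B₁|) ((B₁ ^ 2 + B₁ + |B₂ - B₁|) / 2))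
      ((1 / 4) * (B₁ + 3 * B₁ * max 1 (|B₁ - 4 * B₂| / (3 * B₁)))) := by
  have hc : ‖c ^ 2‖ ≤ 1 := by rw [norm_pow]; linarith [norm_nonneg p]
  set w := 3 / 4 * p + 1 / 4 * q with hw_def
  have hw : ‖w‖ ≤ 1 - ‖c ^ 2‖ := by
    rw [norm_pow]
    calc ‖w‖ ≤ 3 / 4 * ‖p‖ + 1 / 4 * ‖q‖ := by
          refine (norm_add_le _ _).trans ?_
          simp only [norm_mul, norm_div, Complex.norm_ofNat, norm_one]; rfl
      _ ≤ 1 - ‖c‖ ^ 2 := by linarith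
  have hB₁' : |B₁| = B₁ := abs_of_pos hB₁
  refine le_min (le_min ?_ ?_) ?_
  · calc ‖a‖ = ‖(B₁ : ℂ) * (c ^ 2 + w) + ((B₂ - B₁ : ℝ) : ℂ) * c ^ 2‖ := by
          rw [ha, hw_def]; push_cast; ring_nf
      _ ≤ B₁ * ‖c ^ 2 + w‖ + |B₂ - B₁| * ‖c ^ 2‖ :=
          (norm_add_le _ _).trans_eq (by rw [norm_ofReal_mul, norm_ofReal_mul, hB₁'])
      _ ≤ B₁ * 1 + |B₂ - B₁| * 1 := by
          gcongr; linarith [norm_add_le (c ^ 2) w]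
      _ = B₁ + |B₂ - B₁| := by ring
  · calc ‖a‖ = ‖((B₁ ^ 2 / 2 : ℝ) : ℂ) * c ^ 2 + ((B₁ / 2 : ℝ) : ℂ) * (c ^ 2 + p) +
          (((B₂ - B₁) / 2 : ℝ) : ℂ) * c ^ 2‖ := by
          rw [ha']; push_cast; ring_nf
      _ ≤ B₁ ^ 2 / 2 * ‖c ^ 2‖ + B₁ / 2 * ‖c ^ 2 + p‖ + |B₂ - B₁| / 2 * ‖c ^ 2‖ := by
          refine norm_add₃_le.trans_eq ?_
          rw [norm_ofReal_mul, norm_ofReal_mul, norm_ofReal_mul,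
            abs_of_nonneg (by positivity : 0 ≤ B₁ ^ 2 / 2), abs_of_pos (by positivity : 0 < B₁ / 2),
            abs_div, abs_two]
      _ ≤ B₁ ^ 2 / 2 * 1 + B₁ / 2 * 1 + |B₂ - B₁| / 2 * 1 := by
          gcongr; linarith [norm_add_le (c ^ 2) p, norm_pow c 2]
      _ = (B₁ ^ 2 + B₁ + |B₂ - B₁|) / 2 := by ring
  · rw [mul_max_of_nonneg _ _ (by positivity : 0 ≤ 3 * B₁), mul_one,
      mul_div_cancel₀ _ (by positivity : 3 * B₁ ≠ 0)]
    have h4 : 4 * |B₂| ≤ B₁ + |B₁ - 4 * B₂| := by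
      have := abs_sub_abs_le_abs_sub (4 * B₂) B₁
      rw [abs_mul, abs_sub_comm, hB₁'] at this
      norm_num at this
      linarith
    set R := 1 / 4 * (B₁ + max (3 * B₁) |B₁ - 4 * B₂|) with hR
    have hR₁ : B₁ ≤ R := by linarith [le_max_left (3 * B₁) |B₁ - 4 * B₂|]
    have hR₂ : |B₂| ≤ R := by linarith [le_max_right (3 * B₁) |B₁ - 4 * B₂|]
    calc ‖a‖ = ‖(B₂ : ℂ) * c ^ 2 + (B₁ : ℂ) * w‖ := by
          rw [ha, hw_def]; ring_nf
      _ ≤ |B₂| * ‖c ^ 2‖ + B₁ * ‖w‖ :=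
          (norm_add_le _ _).trans_eq (by rw [norm_ofReal_mul, norm_ofReal_mul, hB₁'])
      _ ≤ R * ‖c ^ 2‖ + R * (1 - ‖c ^ 2‖) := by gcongr
      _ = R := by ring

theorem stmt5_general
    (f F : ℂ → ℂ)
    (hf : DifferentiableOn ℂ f (ball 0 1)) (hf0 : f 0 = 0) (hf1 : deriv f 0 = 1)
    (hfi : InjOn f (ball 0 1))
    (hF : DifferentiableOn ℂ F (ball 0 1)) (hF0 : F 0 = 0) (hFi : InjOn F (ball 0 1))
    (hFf : ∀ᶠ z in nhds (0 : ℂ), F (f z) = z)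
    (φ : ℂ → ℂ) (B₁ B₂ : ℝ)
    (hφ : DifferentiableOn ℂ φ (ball 0 1)) (hφ0 : φ 0 = 1)
    (hB₁ : 0 < B₁) (hφ1 : deriv φ 0 = (B₁ : ℂ)) (hφ2 : iteratedDeriv 2 φ 0 = 2 * (B₂ : ℂ))
    (g : ℂ → ℂ)
    (hgf : ∀ z ∈ ball (0 : ℂ) 1, z ≠ 0 → g z = z * deriv f z / f z)
    (hgsub : Subordinate g φ)
    (G : ℂ → ℂ)
    (hGF : ∀ w ∈ ball (0 : ℂ) 1, w ≠ 0 → G w = w * deriv F w / F w)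
    (hGsub : Subordinate G φ) :
    ‖iteratedDeriv 3 f 0 / 6‖ ≤ min (min (B₁ + |B₂ - B₁|) ((B₁ ^ 2 + B₁ + |B₂ - B₁|) / 2))
      ((1 / 4) * (B₁ + 3 * B₁ * max 1 (|B₁ - 4 * B₂| / (3 * B₁)))) := by
  obtain ⟨ω, hω, hω0, hωmaps, hgω⟩ := hgsub
  obtain ⟨τ, hτ, hτ0, hτmaps, hGτ⟩ := hGsub
  have h0 : ball (0 : ℂ) 1 ∈ 𝓝 0 := ball_mem_nhds 0 one_pos
  have hkf : (φ ∘ ω) * f =ᶠ[𝓝 0] fun z => z * deriv f z :=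
    (eqOn_mul_of_eq_id_mul_deriv_div hfi (mem_of_mem_nhds h0) hf0 fun z hz hz0 =>
      (hgω z hz).symm.trans (hgf z hz hz0)).eventuallyEq_of_mem h0
  have hKF : (φ ∘ τ) * F =ᶠ[𝓝 0] fun w => w * deriv F w :=
    (eqOn_mul_of_eq_id_mul_deriv_div hFi (mem_of_mem_nhds h0) hF0 fun w hw hw0 =>
      (hGτ w hw).symm.trans (hGF w hw hw0)).eventuallyEq_of_mem h0
  obtain ⟨hF1, hF2, hF3⟩ :=
    coeffs_of_comp_eventuallyEq_id (hF.analyticAt h0) (hf.analyticAt h0) hf0 hf1 hFf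
  obtain ⟨hf2, hf3⟩ := coeffs_of_starlike_subordinate (hf.analyticAt h0) (hφ.analyticAt h0)
    (hω.analyticAt h0) hf0 hf1 hφ0 hω0 hkf
  obtain ⟨hF2', hF3'⟩ := coeffs_of_starlike_subordinate (hF.analyticAt h0) (hφ.analyticAt h0)
    (hτ.analyticAt h0) hF0 hF1 hφ0 hτ0 hKF
  simp only [hφ1, hφ2] at hf2 hf3 hF2' hF3'
  have hτ1 : deriv τ 0 = -deriv ω 0 := by
    refine mul_left_cancel₀ (by exact_mod_cast hB₁.ne' : (B₁ : ℂ) ≠ 0) ?_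
    linear_combination (hF2 - hF2' - hf2) / 2
  have hω2 := norm_iteratedDeriv_two_le_of_mapsTo_ball hω hω0 hωmaps
  have hτ2 := norm_iteratedDeriv_two_le_of_mapsTo_ball hτ hτ0 hτmaps
  rw [hτ1, norm_neg] at hτ2
  refine norm_le_of_coeff_representations hB₁ hω2 hτ2 ?_ ?_
  · linear_combination (3 * hf3 - 2 * hF3 + hF3'
      - 6 * (iteratedDeriv 2 f 0 + 2 * B₁ * deriv ω 0) * hf2
      + 6 * (B₂ + B₁ ^ 2) * (deriv τ 0 - deriv ω 0) * hτ1) / 24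
  · linear_combination hf3 / 12

theorem stmt5
    (f F : ℂ → ℂ)
    (hf : DifferentiableOn ℂ f (ball 0 1)) (hf0 : f 0 = 0) (hf1 : deriv f 0 = 1)
    (hfi : InjOn f (ball 0 1))
    (hF : DifferentiableOn ℂ F (ball 0 1)) (hF0 : F 0 = 0) (hFi : InjOn F (ball 0 1))
    (hFf : ∀ᶠ z in nhds (0 : ℂ), F (f z) = z)
    (φ : ℂ → ℂ) (B₁ B₂ : ℝ)
    (hφ : DifferentiableOn ℂ φ (ball 0 1)) (hφ0 : φ 0 = 1)
    (hB₁ : 0 < B₁) (hφ1 : deriv φ 0 = (B₁ : ℂ)) (hφ2 : iteratedDeriv 2 φ 0 = 2 * (B₂ : ℂ))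
    (g : ℂ → ℂ) (hg0 : g 0 = 1)
    (hgf : ∀ z ∈ ball (0 : ℂ) 1, z ≠ 0 → g z = z * deriv f z / f z)
    (hgsub : Subordinate g φ)
    (G : ℂ → ℂ) (hG0 : G 0 = 1)
    (hGF : ∀ w ∈ ball (0 : ℂ) 1, w ≠ 0 → G w = w * deriv F w / F w)
    (hGsub : Subordinate G φ) :
    ‖iteratedDeriv 3 f 0 / 6‖ ≤ min (min (B₁ + |B₂ - B₁|) ((B₁ ^ 2 + B₁ + |B₂ - B₁|) / 2))
      ((1 / 4) * (B₁ + 3 * B₁ * max 1 (|B₁ - 4 * B₂| / (3 * B₁)))) :=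
  stmt5_general f F hf hf0 hf1 hfi hF hF0 hFi hFf φ B₁ B₂ hφ hφ0 hB₁ hφ1 hφ2 g hgf hgsub G hGF hGsub
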